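/- arXiv:2502.11087 — 2 statements merged into one kernel-verified Lean document; each statement's English description precedes it below -/
import Mathlib

section
/- (Explicit radial eigenfunctions for the weighted problem) Let N ≥ 3 and define on ℝ^N the functions v₂(x) = (1+|x|²)^{−N/2}(1−|x|²) and v₃(x) = (1+|x|²)^{−N/2−1}(N|x|⁴ − 2(N+2)|x|² + N). Then for all x ∈ ℝ^N: −Δv₂(x) = N(N+2)(1+|x|²)^{−2}·v₂(x) and −Δv₃(x) = (N+2)(N+4)(1+|x|²)^{−2}·v₃(x). -/
open MeasureTheory

noncomputable section

abbrev Euc (N : ℕ) := EuclideanSpace ℝ (Fin N)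

variable (N : ℕ)

/-- The critical Sobolev exponent `2* = 2N/(N-2)`. -/
def twoStar : ℝ := 2 * N / ((N : ℝ) - 2)

/-- The open cone spanned by a set `D` on the unit sphere. -/
def cone (D : Set (Euc N)) : Set (Euc N) :=
  {x | ∃ s : ℝ, 0 < s ∧ ∃ q ∈ D, x = s • q}

/-- `∫_S |∇u|²`. -/
def gradNormSq (S : Set (Euc N)) (u : Euc N → ℝ) : ℝ :=
  ∫ x in S, ‖gradient u x‖ ^ 2

/-- The `L²` norm of the gradient, i.e. the `D^{1,2}` norm. -/
def gradNorm (S : Set (Euc N)) (u : Euc N → ℝ) : ℝ :=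
  Real.sqrt (gradNormSq N S u)

/-- The `L^p` norm on `S`. -/
def lpNorm (S : Set (Euc N)) (p : ℝ) (u : Euc N → ℝ) : ℝ :=
  (∫ x in S, |u x| ^ p) ^ (1 / p)

/-- Membership in `D^{1,2}(S)`: `u ∈ L^{2*}(S)` and `|∇u| ∈ L²(S)`. -/
def memD12 (S : Set (Euc N)) (u : Euc N → ℝ) : Prop :=
  MemLp u (ENNReal.ofReal (twoStar N)) (volume.restrict S) ∧
  MemLp (fun x => ‖gradient u x‖) 2 (volume.restrict S)

/-- The Sobolev quotient `Q_D(u) = ‖∇u‖₂ / ‖u‖_{2*}`. -/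
def sobQ (S : Set (Euc N)) (u : Euc N → ℝ) : ℝ :=
  gradNorm N S u / lpNorm N S (twoStar N) u

/-- The best Sobolev constant `S_D`. -/
def SD (S : Set (Euc N)) : ℝ :=
  sInf {r : ℝ | ∃ u, memD12 N S u ∧ u ≠ 0 ∧ r = sobQ N S u}

/-- A (global) minimizer of the Sobolev quotient. -/
def IsMinimizer (S : Set (Euc N)) (V : Euc N → ℝ) : Prop :=
  memD12 N S V ∧ V ≠ 0 ∧ sobQ N S V = SD N S

/-- A local minimizer of the Sobolev quotient (w.r.t. the `D^{1,2}` distance). -/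
def IsLocMin (S : Set (Euc N)) (V : Euc N → ℝ) : Prop :=
  memD12 N S V ∧ V ≠ 0 ∧
  ∃ δ : ℝ, 0 < δ ∧ ∀ u, memD12 N S u → u ≠ 0 →
    gradNorm N S (fun x => u x - V x) < δ → sobQ N S V ≤ sobQ N S u

/-- The rescaled function `V_s(x) = s · V(s^{2/(N-2)} x)`. -/
def rescale (V : Euc N → ℝ) (s : ℝ) : Euc N → ℝ :=
  fun x => s * V ((s ^ (2 / ((N : ℝ) - 2))) • x)

/-- The distance of `φ` from the manifold `M_V = {c · V_s}`. -/
def distM (S : Set (Euc N)) (V φ : Euc N → ℝ) : ℝ :=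
  ⨅ c : {c : ℝ // c ≠ 0}, ⨅ s : {s : ℝ // 0 < s},
    gradNorm N S (fun x => φ x - c.1 * rescale N V s.1 x)

/-- `W = ∂_s V_s |_{s=1}`, i.e. `W(x) = V(x) + (2/(N-2)) x·∇V(x)`. -/
def Wfun (V : Euc N → ℝ) : Euc N → ℝ :=
  fun x => V x + (2 / ((N : ℝ) - 2)) * (inner ℝ x (gradient V x) : ℝ)

/-- `∂_s V_s |_{s = s₀}`. -/
def dVs (V : Euc N → ℝ) (s : ℝ) : Euc N → ℝ :=
  fun x => V ((s ^ (2 / ((N : ℝ) - 2))) • x) +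
    (2 / ((N : ℝ) - 2)) * (s ^ (2 / ((N : ℝ) - 2))) *
      (inner ℝ x (gradient V ((s ^ (2 / ((N : ℝ) - 2))) • x)) : ℝ)

/-- The second variation `Q_V(η)` of the Sobolev quotient at a minimizer `V`. -/
def secondVar (S : Set (Euc N)) (V η : Euc N → ℝ) : ℝ :=
  (∫ x in S, ‖gradient η x‖ ^ 2)
  - 4 * sobQ N S V ^ twoStar N * (∫ x in S, V x ^ (twoStar N - 1) * η x)
      * (∫ x in S, (inner ℝ (gradient V x) (gradient η x) : ℝ))
  + sobQ N S V ^ twoStar N *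
      (-(twoStar N - 1) * (∫ x in S, V x ^ (twoStar N - 2) * η x ^ 2)
        + sobQ N S V ^ twoStar N * (twoStar N + 2) *
          (∫ x in S, V x ^ (twoStar N - 1) * η x) ^ 2)

/-- Nondegeneracy: the second variation vanishes only on `span{V, ∂_s V_s|_{s=1}}`. -/
def Nondeg (S : Set (Euc N)) (V : Euc N → ℝ) : Prop :=
  ∀ η : Euc N → ℝ, memD12 N S η → secondVar N S V η = 0 →
    ∃ a b : ℝ, η = fun x => a * V x + b * Wfun N V x

/-- The infimum `μ₃` of the Rayleigh quotient with weight `Vw^{2*-2}` over functions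
`D^{1,2}`-orthogonal to `a` and `b`. -/
def mu3 (S : Set (Euc N)) (Vw a b : Euc N → ℝ) : ℝ :=
  sInf {r : ℝ | ∃ ω : Euc N → ℝ, memD12 N S ω ∧ ω ≠ 0 ∧
    (∫ x in S, (inner ℝ (gradient ω x) (gradient a x) : ℝ)) = 0 ∧
    (∫ x in S, (inner ℝ (gradient ω x) (gradient b x) : ℝ)) = 0 ∧
    r = gradNormSq N S ω / (∫ x in S, Vw x ^ (twoStar N - 2) * ω x ^ 2)}

end

/-- The Euclidean Laplacian `Δf = ∑ᵢ ∂²f/∂xᵢ²`. -/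
noncomputable def lap {N : ℕ} (f : Euc N → ℝ) (x : Euc N) : ℝ :=
  ∑ i : Fin N,
    fderiv ℝ (fun y => fderiv ℝ f y (EuclideanSpace.single i (1 : ℝ))) x
      (EuclideanSpace.single i (1 : ℝ))

/-!
Both functions are of the form `v(x) = (1 + |x|²)^p q(|x|²)`. For `f(x) = g(|x|²)` one has
`Δf(x) = 4|x|² g''(|x|²) + 2N g'(|x|²)`, and after factoring out `(1 + t)^(p - 2)` the equation
`-Δv = μ (1 + |x|²)⁻² v` becomes a second-order ODE with polynomial coefficients for `q`. For
`q(t) = 1 - t`, `p = -N/2`, `μ = N(N + 2)` and for `q(t) = Nt² - 2(N + 2)t + N`, `p = -N/2 - 1`,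
`μ = (N + 2)(N + 4)` it holds as a polynomial identity.
-/

section RadialLaplacian

variable {N : ℕ} {g g' g'' : ℝ → ℝ}

theorem hasFDerivAt_comp_norm_sq {E : Type*} [NormedAddCommGroup E] [InnerProductSpace ℝ E]
    (hg : ∀ t, 0 ≤ t → HasDerivAt g (g' t) t) (y : E) :
    HasFDerivAt (fun z : E => g (‖z‖ ^ 2)) (g' (‖y‖ ^ 2) • (2 : ℕ) • innerSL ℝ y) y :=
  (hg _ (sq_nonneg _)).comp_hasFDerivAt y (hasStrictFDerivAt_norm_sq y).hasFDerivAt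

theorem fderiv_comp_norm_sq_single (hg : ∀ t, 0 ≤ t → HasDerivAt g (g' t) t) (i : Fin N) :
    (fun y : Euc N => fderiv ℝ (fun z => g (‖z‖ ^ 2)) y (EuclideanSpace.single i 1)) =
      fun y => g' (‖y‖ ^ 2) * (2 * y i) := by
  funext y
  rw [(hasFDerivAt_comp_norm_sq hg y).fderiv]
  simp [EuclideanSpace.inner_single_right, mul_comm]

theorem second_partial_comp_norm_sq (hg : ∀ t, 0 ≤ t → HasDerivAt g (g' t) t)
    (hg' : ∀ t, 0 ≤ t → HasDerivAt g' (g'' t) t) (x : Euc N) (i : Fin N) :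
    fderiv ℝ (fun y : Euc N => fderiv ℝ (fun z => g (‖z‖ ^ 2)) y (EuclideanSpace.single i 1)) x
        (EuclideanSpace.single i 1) =
      2 * g' (‖x‖ ^ 2) + 4 * x i ^ 2 * g'' (‖x‖ ^ 2) := by
  have hcoord :
      HasFDerivAt (fun y : Euc N => 2 * y i) ((2 : ℝ) • EuclideanSpace.proj (𝕜 := ℝ) i) x :=
    (EuclideanSpace.proj (𝕜 := ℝ) i).hasFDerivAt.const_mul 2
  have hprod : HasFDerivAt (fun y : Euc N => g' (‖y‖ ^ 2) * (2 * y i)) _ x :=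
    (hasFDerivAt_comp_norm_sq hg' x).mul hcoord
  rw [fderiv_comp_norm_sq_single hg, hprod.fderiv]
  simp only [add_apply, smul_apply, PiLp.proj_apply, PiLp.single_eq_same, coe_innerSL_apply,
    EuclideanSpace.inner_single_right, smul_eq_mul, nsmul_eq_mul, Real.ringHom_apply]
  ring

theorem lap_comp_norm_sq (hg : ∀ t, 0 ≤ t → HasDerivAt g (g' t) t)
    (hg' : ∀ t, 0 ≤ t → HasDerivAt g' (g'' t) t) (x : Euc N) :
    lap (fun z : Euc N => g (‖z‖ ^ 2)) x = 4 * ‖x‖ ^ 2 * g'' (‖x‖ ^ 2) + 2 * N * g' (‖x‖ ^ 2) := by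
  simp only [lap, second_partial_comp_norm_sq hg hg', Finset.sum_add_distrib, Finset.sum_const,
    Finset.card_univ, Fintype.card_fin, nsmul_eq_mul, ← Finset.sum_mul, ← Finset.mul_sum]
  rw [EuclideanSpace.real_norm_sq_eq]
  ring

end RadialLaplacian

theorem hasDerivAt_one_add_rpow_mul (p : ℝ) {q q' : ℝ → ℝ} {t : ℝ} (hq : HasDerivAt q (q' t) t)
    (ht : 0 ≤ t) :
    HasDerivAt (fun s => (1 + s) ^ p * q s) (p * ((1 + t) ^ (p - 1) * q t) + (1 + t) ^ p * q' t)
      t := by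
  have hbase : HasDerivAt (fun s => (1 + s) ^ p) (p * (1 + t) ^ (p - 1)) t := by
    simpa using ((hasDerivAt_id t).const_add 1).rpow_const (p := p) (Or.inl (by positivity))
  exact (hbase.mul hq).congr_deriv (by ring)

theorem neg_lap_one_add_norm_sq_rpow_mul {N : ℕ} (p μ : ℝ) {q q' q'' : ℝ → ℝ}
    (hq : ∀ t, HasDerivAt q (q' t) t) (hq' : ∀ t, HasDerivAt q' (q'' t) t)
    (hode : ∀ t, 0 ≤ t →
      -(4 * t * (p * (p - 1) * q t + 2 * p * (1 + t) * q' t + (1 + t) ^ 2 * q'' t) +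
          2 * N * (1 + t) * (p * q t + (1 + t) * q' t)) = μ * q t)
    (x : Euc N) :
    -lap (fun y : Euc N => (1 + ‖y‖ ^ 2) ^ p * q (‖y‖ ^ 2)) x =
      μ * ((1 + ‖x‖ ^ 2) ^ 2)⁻¹ * ((1 + ‖x‖ ^ 2) ^ p * q (‖x‖ ^ 2)) := by
  have hg (t : ℝ) (ht : 0 ≤ t) := hasDerivAt_one_add_rpow_mul p (hq t) ht
  have hg' (t : ℝ) (ht : 0 ≤ t) :=
    ((hasDerivAt_one_add_rpow_mul (p - 1) (hq t) ht).const_mul p).add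
      (hasDerivAt_one_add_rpow_mul p (hq' t) ht)
  rw [lap_comp_norm_sq hg hg']
  have ht : 0 ≤ ‖x‖ ^ 2 := sq_nonneg _
  generalize ‖x‖ ^ 2 = t at ht ⊢
  have hpos : 0 < 1 + t := by positivity
  have hsub_one : (1 + t) ^ (p - 1) = (1 + t) ^ (p - 2) * (1 + t) := by
    rw [← Real.rpow_add_one hpos.ne']; ring_nf
  have hself : (1 + t) ^ p = (1 + t) ^ (p - 2) * (1 + t) ^ 2 := by
    rw [← Real.rpow_natCast, ← Real.rpow_add hpos]; ring_nf
  rw [show p - 1 - 1 = p - 2 by ring, hsub_one, hself]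
  calc _ = (1 + t) ^ (p - 2) *
        -(4 * t * (p * (p - 1) * q t + 2 * p * (1 + t) * q' t + (1 + t) ^ 2 * q'' t) +
          2 * N * (1 + t) * (p * q t + (1 + t) * q' t)) := by ring
    _ = (1 + t) ^ (p - 2) * (μ * q t) := by rw [hode t ht]
    _ = _ := by field_simp

theorem explicit_radial_eigenfunctions_general
    (N : ℕ)
    (v₂ v₃ : Euc N → ℝ)
    (hv₂ : v₂ = fun x => (1 + ‖x‖ ^ 2) ^ (-(N : ℝ) / 2) * (1 - ‖x‖ ^ 2))
    (hv₃ : v₃ = fun x => (1 + ‖x‖ ^ 2) ^ (-(N : ℝ) / 2 - 1) *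
      ((N : ℝ) * ‖x‖ ^ 4 - 2 * ((N : ℝ) + 2) * ‖x‖ ^ 2 + (N : ℝ))) :
    (∀ x : Euc N, -lap v₂ x =
      (N : ℝ) * ((N : ℝ) + 2) * ((1 + ‖x‖ ^ 2) ^ 2)⁻¹ * v₂ x) ∧
    (∀ x : Euc N, -lap v₃ x =
      ((N : ℝ) + 2) * ((N : ℝ) + 4) * ((1 + ‖x‖ ^ 2) ^ 2)⁻¹ * v₃ x) := by
  subst hv₂ hv₃
  have hq (t : ℝ) : HasDerivAt (fun s : ℝ => (N : ℝ) * s ^ 2 - 2 * ((N : ℝ) + 2) * s + N)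
      (2 * N * t - 2 * ((N : ℝ) + 2)) t :=
    ((((hasDerivAt_pow 2 t).const_mul _).sub ((hasDerivAt_id t).const_mul _)).add_const _)
      |>.congr_deriv (by push_cast; ring)
  have hq' (t : ℝ) : HasDerivAt (fun s : ℝ => 2 * N * s - 2 * ((N : ℝ) + 2)) (2 * N) t :=
    (((hasDerivAt_id t).const_mul _).sub_const _).congr_deriv (by ring)
  have hsq (y : Euc N) : ‖y‖ ^ 4 = (‖y‖ ^ 2) ^ 2 := by ring
  simp only [hsq]
  exact ⟨neg_lap_one_add_norm_sq_rpow_mul (-(N : ℝ) / 2) (N * (N + 2)) (q := fun t => 1 - t)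
      (fun t => (hasDerivAt_id t).const_sub 1) (fun t => hasDerivAt_const t (-1))
      (fun t _ => by ring),
    neg_lap_one_add_norm_sq_rpow_mul (-(N : ℝ) / 2 - 1) ((N + 2) * (N + 4)) hq hq'
      (fun t _ => by ring)⟩

/-- explicit radial eigenfunctions, Appendix A: the functions
`v₂(x) = (1+|x|²)^{-N/2}(1-|x|²)` and `v₃(x) = (1+|x|²)^{-N/2-1}(N|x|⁴-2(N+2)|x|²+N)`
satisfy `-Δv₂ = N(N+2)(1+|x|²)^{-2} v₂` and `-Δv₃ = (N+2)(N+4)(1+|x|²)^{-2} v₃`. -/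
theorem explicit_radial_eigenfunctions
    (N : ℕ) (hN : 3 ≤ N)
    (v₂ v₃ : Euc N → ℝ)
    (hv₂ : v₂ = fun x => (1 + ‖x‖ ^ 2) ^ (-(N : ℝ) / 2) * (1 - ‖x‖ ^ 2))
    (hv₃ : v₃ = fun x => (1 + ‖x‖ ^ 2) ^ (-(N : ℝ) / 2 - 1) *
      ((N : ℝ) * ‖x‖ ^ 4 - 2 * ((N : ℝ) + 2) * ‖x‖ ^ 2 + (N : ℝ))) :
    (∀ x : Euc N, -lap v₂ x =
      (N : ℝ) * ((N : ℝ) + 2) * ((1 + ‖x‖ ^ 2) ^ 2)⁻¹ * v₂ x) ∧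
    (∀ x : Euc N, -lap v₃ x =
      ((N : ℝ) + 2) * ((N : ℝ) + 4) * ((1 + ‖x‖ ^ 2) ^ 2)⁻¹ * v₃ x) :=
  explicit_radial_eigenfunctions_general N v₂ v₃ hv₂ hv₃
end

section
/- (Radial ODE for the first nonradial eigenvalue branch) Let N ≥ 3, β ≥ 0, and set λ = β² + (N−2)β. Define R : (0,∞) → ℝ by R(r) = (1+r²)^{1−N/2−β}·r^β. Then R solves, for every r > 0, the ordinary differential equation R''(r) + ((N−1)/r)·R'(r) − (λ/r²)·R(r) + (2β+N)(2β+N−2)·(1+r²)^{−2}·R(r) = 0. -/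
open MeasureTheory

open Topology

/- Writing `R = (1 + r²)^a r^β` with `a = 1 - N/2 - β`, its logarithmic derivative is
`g = 2ar/(1+r²) + β/r`, so `R' = R g` and `R'' = R (g² + g')`. The ODE divided by `R` is then
a rational identity in `r`. -/

theorem hasDerivAt_one_add_sq (r : ℝ) : HasDerivAt (fun r : ℝ => 1 + r ^ 2) (2 * r) r := by
  simpa using (hasDerivAt_pow 2 r).const_add 1

theorem deriv_deriv_eq_mul_of_hasDerivAt_mul {f g : ℝ → ℝ} {x g' : ℝ}
    (hf : ∀ᶠ y in 𝓝 x, HasDerivAt f (f y * g y) y) (hg : HasDerivAt g g' x) :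
    deriv (deriv f) x = f x * (g x ^ 2 + g') := by
  have hderiv : deriv f =ᶠ[𝓝 x] fun y => f y * g y :=
    hf.mono fun y hy => hy.deriv
  rw [hderiv.deriv_eq]
  exact (hf.self_of_nhds.mul hg).deriv.trans (by ring)

theorem hasDerivAt_one_add_sq_rpow_mul_rpow (a b : ℝ) {r : ℝ} (hr : 0 < r) :
    HasDerivAt (fun r : ℝ => (1 + r ^ 2) ^ a * r ^ b)
      ((1 + r ^ 2) ^ a * r ^ b * (2 * a * r / (1 + r ^ 2) + b / r)) r := by
  have hpos : (0 : ℝ) < 1 + r ^ 2 := by positivity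
  refine (((hasDerivAt_one_add_sq r).rpow_const (p := a) (Or.inl hpos.ne')).mul
    (Real.hasDerivAt_rpow_const (p := b) (Or.inl hr.ne'))).congr_deriv ?_
  rw [Real.rpow_sub hpos, Real.rpow_sub hr, Real.rpow_one, Real.rpow_one]
  field_simp

theorem hasDerivAt_logDeriv_one_add_sq_rpow_mul_rpow (a b : ℝ) {r : ℝ} (hr : 0 < r) :
    HasDerivAt (fun r : ℝ => 2 * a * r / (1 + r ^ 2) + b / r)
      (2 * a * (1 - r ^ 2) / (1 + r ^ 2) ^ 2 - b / r ^ 2) r := by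
  have hpos : (0 : ℝ) < 1 + r ^ 2 := by positivity
  have hfrac : HasDerivAt (fun r : ℝ => 2 * a * r / (1 + r ^ 2))
      ((2 * a * (1 + r ^ 2) - 2 * a * r * (2 * r)) / (1 + r ^ 2) ^ 2) r :=
    (((hasDerivAt_id r).const_mul (2 * a)).div (hasDerivAt_one_add_sq r) hpos.ne').congr_deriv
      (by simp)
  have hinv : HasDerivAt (fun r : ℝ => b / r) (b * -(r ^ 2)⁻¹) r := by
    simpa [div_eq_mul_inv] using (hasDerivAt_inv hr.ne').const_mul b
  refine (hfrac.add hinv).congr_deriv ?_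
  field_simp
  ring

theorem radial_ODE_first_nonradial_branch_general
    (N : ℕ) (β : ℝ)
    (R : ℝ → ℝ)
    (hR : R = fun r : ℝ => (1 + r ^ 2) ^ (1 - (N : ℝ) / 2 - β) * r ^ β) :
    ∀ r : ℝ, 0 < r →
      deriv (deriv R) r + ((N : ℝ) - 1) / r * deriv R r
        - ((β ^ 2 + ((N : ℝ) - 2) * β) / r ^ 2) * R r
        + (2 * β + (N : ℝ)) * (2 * β + (N : ℝ) - 2) * ((1 + r ^ 2) ^ 2)⁻¹ * R r = 0 := by
  intro r hr
  set a : ℝ := 1 - (N : ℝ) / 2 - β with ha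
  subst hR
  have hR_deriv : ∀ᶠ y in 𝓝 r, HasDerivAt (fun r : ℝ => (1 + r ^ 2) ^ a * r ^ β)
      ((1 + y ^ 2) ^ a * y ^ β * (2 * a * y / (1 + y ^ 2) + β / y)) y :=
    (eventually_gt_nhds hr).mono fun y hy => hasDerivAt_one_add_sq_rpow_mul_rpow a β hy
  rw [deriv_deriv_eq_mul_of_hasDerivAt_mul hR_deriv
      (hasDerivAt_logDeriv_one_add_sq_rpow_mul_rpow a β hr),
    (hasDerivAt_one_add_sq_rpow_mul_rpow a β hr).deriv, ha]
  field_simp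
  ring

/-- radial ODE (2.22) for the first nonradial eigenvalue branch: with
`λ = β² + (N-2)β` and `R(r) = (1+r²)^{1-N/2-β} r^β`, for every `r > 0` one has
`R'' + (N-1)/r · R' - λ/r² · R + (2β+N)(2β+N-2)(1+r²)^{-2} R = 0`. -/
theorem radial_ODE_first_nonradial_branch
    (N : ℕ) (hN : 3 ≤ N) (β : ℝ) (hβ : 0 ≤ β)
    (R : ℝ → ℝ)
    (hR : R = fun r : ℝ => (1 + r ^ 2) ^ (1 - (N : ℝ) / 2 - β) * r ^ β) :
    ∀ r : ℝ, 0 < r →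
      deriv (deriv R) r + ((N : ℝ) - 1) / r * deriv R r
        - ((β ^ 2 + ((N : ℝ) - 2) * β) / r ^ 2) * R r
        + (2 * β + (N : ℝ)) * (2 * β + (N : ℝ) - 2) * ((1 + r ^ 2) ^ 2)⁻¹ * R r = 0 :=
  radial_ODE_first_nonradial_branch_general N β R hR
end
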